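/- Let P = (E, ρ) be a (q,m)-demi-polymatroid of rank K = ρ(E), and let p, i, j be integers such that 1 ≤ p + i·m ≤ mn − K and 1 ≤ p + K + j·m ≤ K. Then d_{p+im}(P*) ≠ n + 1 − d_{p+K+jm}(P). -/

import Mathlib

/-! The conullity function of the dual `P*` is the nullity `ν(X) = m·dim X − ρ(X)` of `P`.
Suppose `e = d_r(P*)` and `d = d_s(P)` satisfy `e = n + 1 − d`. The orthogonal complements of
minimal witnesses for `d` and `e` have dimensions `e − 1 < e` and `d − 1 < d`, so they fail the
respective weight conditions; the resulting four inequalities squeeze `r − s + K` strictly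
between `m(e − 1)` and `me`. For `r = p + im` and `s = p + K + jm` that number is the multiple
`(i − j)m`. -/

set_option linter.unusedSectionVars false

open Module Matrix

variable {F : Type*} [Field F] [Fintype F] {n : ℕ}

/-- The orthogonal complement of a subspace of `𝔽_q^n` with respect to the standard dot product. -/
def perp (X : Submodule F (Fin n → F)) : Submodule F (Fin n → F) where
  carrier := {x | ∀ y ∈ X, dotProduct x y = 0}
  add_mem' := fun {a b} ha hb y hy => by
    rw [Set.mem_setOf_eq] at *
    rw [add_dotProduct, ha y hy, hb y hy, add_zero]
  zero_mem' := fun y hy => zero_dotProduct y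
  smul_mem' := fun c a ha y hy => by
    rw [Set.mem_setOf_eq] at *
    rw [smul_dotProduct, ha y hy, smul_zero]

/-- The dual rank function `ρ*(X) = ρ(X^⊥) + m·dim X − ρ(E)`. -/
noncomputable def dualRho (m : ℕ) (rho : Submodule F (Fin n → F) → ℤ) (X : Submodule F (Fin n → F)) : ℤ :=
  rho (perp X) + (m : ℤ) * (finrank F X : ℤ) - rho ⊤

/-- The nullity function `ν(X) = m·dim X − ρ(X)`. -/
noncomputable def nullity (m : ℕ) (rho : Submodule F (Fin n → F) → ℤ) (X : Submodule F (Fin n → F)) : ℤ :=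
  (m : ℤ) * (finrank F X : ℤ) - rho X

/-- The conullity function `ν*(X) = ρ(E) − ρ(X^⊥)`. -/
def coNull (rho : Submodule F (Fin n → F) → ℤ) (X : Submodule F (Fin n → F)) : ℤ :=
  rho ⊤ - rho (perp X)

/-- The `r`-th generalized weight `d_r = min{dim X : ν*(X) ≥ r}`. -/
noncomputable def genW (rho : Submodule F (Fin n → F) → ℤ) (r : ℤ) : ℕ :=
  sInf {d : ℕ | ∃ X : Submodule F (Fin n → F), finrank F X = d ∧ r ≤ coNull rho X}

/-- `h(x) = max{ν(X) : dim X = x}`. -/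
noncomputable def hFun (m : ℕ) (rho : Submodule F (Fin n → F) → ℤ) (x : ℕ) : ℤ :=
  sSup {v : ℤ | ∃ X : Submodule F (Fin n → F), finrank F X = x ∧ v = nullity m rho X}

/-- `h*(x) = max{ν*(X) : dim X = x}`. -/
noncomputable def hStar (rho : Submodule F (Fin n → F) → ℤ) (x : ℕ) : ℤ :=
  sSup {v : ℤ | ∃ X : Submodule F (Fin n → F), finrank F X = x ∧ v = coNull rho X}

/-- A `(q,m)`-polymatroid on `E = 𝔽_q^n`. -/
structure QMPolymatroid (F : Type*) [Field F] [Fintype F] (n m : ℕ) where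
  rho : Submodule F (Fin n → F) → ℤ
  rho_nonneg : ∀ X, 0 ≤ rho X
  rho_le : ∀ X, rho X ≤ (m : ℤ) * (finrank F X : ℤ)
  rho_mono : ∀ ⦃X Y⦄, X ≤ Y → rho X ≤ rho Y
  rho_submodular : ∀ X Y, rho (X ⊔ Y) + rho (X ⊓ Y) ≤ rho X + rho Y

/-- A `(q,m)`-demi-polymatroid on `E = 𝔽_q^n`. -/
structure QMDemiPolymatroid (F : Type*) [Field F] [Fintype F] (n m : ℕ) where
  rho : Submodule F (Fin n → F) → ℤ
  rho_nonneg : ∀ X, 0 ≤ rho X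
  rho_le : ∀ X, rho X ≤ (m : ℤ) * (finrank F X : ℤ)
  rho_mono : ∀ ⦃X Y⦄, X ≤ Y → rho X ≤ rho Y
  dual_nonneg : ∀ X, 0 ≤ dualRho m rho X
  dual_le : ∀ X, dualRho m rho X ≤ (m : ℤ) * (finrank F X : ℤ)
  dual_mono : ∀ ⦃X Y⦄, X ≤ Y → dualRho m rho X ≤ dualRho m rho Y

section Codes

variable {m : ℕ}

/-- The row space of a matrix. -/
def rowSpace (A : Matrix (Fin m) (Fin n) F) : Submodule F (Fin n → F) :=
  Submodule.span F (Set.range A)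

theorem rowSpace_le_iff (A : Matrix (Fin m) (Fin n) F) (X : Submodule F (Fin n → F)) :
    rowSpace A ≤ X ↔ ∀ i, A i ∈ X := by
  rw [rowSpace, Submodule.span_le]; exact Set.range_subset_iff

/-- Matrices whose row space is contained in `X`. -/
def supportedOn (m : ℕ) (X : Submodule F (Fin n → F)) :
    Submodule F (Matrix (Fin m) (Fin n) F) where
  carrier := {A | rowSpace A ≤ X}
  add_mem' := fun {A B} hA hB => by
    rw [Set.mem_setOf_eq, rowSpace_le_iff] at *
    exact fun i => X.add_mem (hA i) (hB i)
  zero_mem' := by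
    rw [Set.mem_setOf_eq, rowSpace_le_iff]
    exact fun i => X.zero_mem
  smul_mem' := fun c A hA => by
    rw [Set.mem_setOf_eq, rowSpace_le_iff] at *
    exact fun i => X.smul_mem c (hA i)

/-- `C(X)`: the subspace of a Delsarte code `C` of matrices whose row space lies in `X`. -/
def subcode (C : Submodule F (Matrix (Fin m) (Fin n) F)) (X : Submodule F (Fin n → F)) :
    Submodule F (Matrix (Fin m) (Fin n) F) :=
  C ⊓ supportedOn m X

/-- The rank function `ρ_C(X) = dim C − dim C(X^⊥)` of a Delsarte code. -/
noncomputable def rhoC (C : Submodule F (Matrix (Fin m) (Fin n) F))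
    (X : Submodule F (Fin n → F)) : ℤ :=
  (finrank F C : ℤ) - (finrank F (subcode C (perp X)) : ℤ)

/-- The generalized weight `d_r(C) = min{dim X : dim C(X) ≥ r}` of a Delsarte code. -/
noncomputable def codeWeight (C : Submodule F (Matrix (Fin m) (Fin n) F)) (r : ℤ) : ℕ :=
  sInf {d : ℕ | ∃ X : Submodule F (Fin n → F),
    finrank F X = d ∧ r ≤ (finrank F (subcode C X) : ℤ)}

/-- The trace dual of a Delsarte code. -/
def traceDual (C : Submodule F (Matrix (Fin m) (Fin n) F)) :
    Submodule F (Matrix (Fin m) (Fin n) F) where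
  carrier := {N | ∀ M ∈ C, Matrix.trace (M * Nᵀ) = 0}
  add_mem' := fun {N₁ N₂} h1 h2 M hM => by
    rw [Matrix.transpose_add, Matrix.mul_add, Matrix.trace_add, h1 M hM, h2 M hM, add_zero]
  zero_mem' := fun M hM => by simp
  smul_mem' := fun c N hN M hM => by
    rw [Matrix.transpose_smul, Matrix.mul_smul, Matrix.trace_smul, hN M hM, smul_zero]

/-- The transposed code `Cᵀ = {Mᵗ : M ∈ C}` of a code of square matrices. -/
def transposeCode (C : Submodule F (Matrix (Fin n) (Fin n) F)) :
    Submodule F (Matrix (Fin n) (Fin n) F) where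
  carrier := {A | Aᵀ ∈ C}
  add_mem' := fun {A B} hA hB => by
    rw [Set.mem_setOf_eq, Matrix.transpose_add]; exact C.add_mem hA hB
  zero_mem' := by
    rw [Set.mem_setOf_eq, Matrix.transpose_zero]; exact C.zero_mem
  smul_mem' := fun c A hA => by
    rw [Set.mem_setOf_eq, Matrix.transpose_smul]; exact C.smul_mem c hA

/-- The maximum rank of a matrix in a subspace of matrices. -/
noncomputable def maxrank (A : Submodule F (Matrix (Fin m) (Fin n) F)) : ℕ :=
  sSup {r : ℕ | ∃ M ∈ A, M.rank = r}

/-- An optimal anticode: a subspace `𝒜` of `𝕄` with `dim 𝒜 = m · maxrank 𝒜`. -/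
def IsOptimalAnticode (A : Submodule F (Matrix (Fin m) (Fin n) F)) : Prop :=
  finrank F A = m * maxrank A

/-- Ravagnani's generalized weight `a_r(C)`. -/
noncomputable def aWeight (C : Submodule F (Matrix (Fin m) (Fin n) F)) (r : ℤ) : ℕ :=
  (sInf {d : ℕ | ∃ A : Submodule F (Matrix (Fin m) (Fin n) F),
    IsOptimalAnticode A ∧ finrank F A = d ∧ r ≤ (finrank F (A ⊓ C : Submodule F _) : ℤ)}) / m

end Codes

section Orthogonal

variable {𝕜 : Type*} [Field 𝕜] {N : ℕ}

theorem perp_eq_comap_dualAnnihilator (X : Submodule 𝕜 (Fin N → 𝕜)) :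
    perp X = X.dualAnnihilator.comap (dotProductEquiv 𝕜 (Fin N)).toLinearMap := by
  ext x
  simp [perp, Submodule.mem_dualAnnihilator]

theorem finrank_perp_add_finrank (X : Submodule 𝕜 (Fin N → 𝕜)) :
    finrank 𝕜 (perp X) + finrank 𝕜 X = N := by
  rw [perp_eq_comap_dualAnnihilator,
    (LinearEquiv.ofSubmodule' (dotProductEquiv 𝕜 (Fin N)) _).finrank_eq, add_comm,
    Subspace.finrank_add_finrank_dualAnnihilator_eq, Module.finrank_fin_fun]

theorem perp_perp (X : Submodule 𝕜 (Fin N → 𝕜)) : perp (perp X) = X := by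
  have hle : X ≤ perp (perp X) := fun x hx y hy => by rw [dotProduct_comm]; exact hy x hx
  refine (Submodule.eq_of_le_of_finrank_le hle ?_).symm
  have h₁ := finrank_perp_add_finrank X
  have h₂ := finrank_perp_add_finrank (perp X)
  omega

theorem perp_top : perp (⊤ : Submodule 𝕜 (Fin N → 𝕜)) = ⊥ := by
  have h := finrank_perp_add_finrank (⊤ : Submodule 𝕜 (Fin N → 𝕜))
  rw [finrank_top, Module.finrank_fin_fun] at h
  exact Submodule.finrank_eq_zero.mp (by omega)

variable {rho : Submodule 𝕜 (Fin N → 𝕜) → ℤ} {r : ℤ}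

theorem exists_finrank_eq_genW (X : Submodule 𝕜 (Fin N → 𝕜)) (hX : r ≤ coNull rho X) :
    ∃ Y : Submodule 𝕜 (Fin N → 𝕜), finrank 𝕜 Y = genW rho r ∧ r ≤ coNull rho Y :=
  Nat.sInf_mem
    (s := {d | ∃ Y : Submodule 𝕜 (Fin N → 𝕜), finrank 𝕜 Y = d ∧ r ≤ coNull rho Y})
    ⟨_, X, rfl, hX⟩

theorem coNull_lt_of_finrank_lt_genW {X : Submodule 𝕜 (Fin N → 𝕜)}
    (hX : finrank 𝕜 X < genW rho r) : coNull rho X < r :=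
  lt_of_not_ge fun h => Nat.notMem_of_lt_sInf hX ⟨X, rfl, h⟩

theorem coNull_dualRho {m : ℕ} (h₀ : rho ⊥ = 0) (X : Submodule 𝕜 (Fin N → 𝕜)) :
    coNull (dualRho m rho) X = nullity m rho X := by
  have h : (finrank 𝕜 (perp X) + finrank 𝕜 X : ℤ) = N := mod_cast finrank_perp_add_finrank X
  simp only [coNull, dualRho, nullity, perp_top, perp_perp, h₀, finrank_top, finrank_fin_fun]
  linear_combination -(m : ℤ) * h

end Orthogonal

theorem Int.mul_notMem_Ioo_mul_sub_one_mul (k e : ℤ) (m : ℕ) :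
    k * m ∉ Set.Ioo (m * (e - 1)) (m * e) := by
  rintro ⟨hlow, hupp⟩
  rw [mul_comm k] at hlow hupp
  have := lt_of_mul_lt_mul_left hlow (Int.natCast_nonneg m)
  have := lt_of_mul_lt_mul_left hupp (Int.natCast_nonneg m)
  omega

namespace QMDemiPolymatroid

variable {m : ℕ} (P : QMDemiPolymatroid F n m)

theorem rho_bot : P.rho ⊥ = 0 :=
  le_antisymm (by simpa using P.rho_le ⊥) (P.rho_nonneg ⊥)

theorem sub_add_rho_top_mem_Ioo_of_genW_dualRho_eq {r s : ℤ}
    (hr : r ≤ m * n - P.rho ⊤) (hs : s ≤ P.rho ⊤)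
    (h : (genW (dualRho m P.rho) r : ℤ) = n + 1 - genW P.rho s) :
    r - s + P.rho ⊤ ∈
      Set.Ioo (m * (genW (dualRho m P.rho) r - 1 : ℤ)) (m * genW (dualRho m P.rho) r) := by
  have hdual := coNull_dualRho (m := m) P.rho_bot
  obtain ⟨X, hXdim, hX⟩ := exists_finrank_eq_genW (rho := P.rho) (r := s) ⊤
    (by rwa [coNull, perp_top, P.rho_bot, sub_zero])
  obtain ⟨Y, hYdim, hY⟩ := exists_finrank_eq_genW (rho := dualRho m P.rho) (r := r) ⊤
    (by rwa [hdual, nullity, finrank_top, finrank_fin_fun])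
  have hXd := finrank_perp_add_finrank X
  have hYd := finrank_perp_add_finrank Y
  have hXperp := coNull_lt_of_finrank_lt_genW (rho := dualRho m P.rho) (r := r) (X := perp X)
    (by omega)
  have hYperp := coNull_lt_of_finrank_lt_genW (rho := P.rho) (r := s) (X := perp Y) (by omega)
  rw [hdual, nullity] at hY hXperp
  rw [coNull, perp_perp] at hYperp
  rw [coNull] at hX
  have hXperp_dim : (finrank F (perp X) : ℤ) = genW (dualRho m P.rho) r - 1 := by omega
  rw [hXperp_dim] at hXperp
  rw [hYdim] at hY
  constructor <;> linarith

end QMDemiPolymatroid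

theorem demi_partial_wei_duality_general {F : Type*} [Field F] [Fintype F] {n m : ℕ}
    (P : QMDemiPolymatroid F n m) (p i j : ℤ)
    (h2 : p + i * m ≤ (m : ℤ) * (n : ℤ) - P.rho ⊤)
    (h4 : p + P.rho ⊤ + j * m ≤ P.rho ⊤) :
    (genW (dualRho m P.rho) (p + i * m) : ℤ)
      ≠ (n : ℤ) + 1 - (genW P.rho (p + P.rho ⊤ + j * m) : ℤ) := by
  intro h
  have hmem := P.sub_add_rho_top_mem_Ioo_of_genW_dualRho_eq h2 h4 h
  rw [show p + i * m - (p + P.rho ⊤ + j * m) + P.rho ⊤ = (i - j) * m by ring] at hmem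
  exact Int.mul_notMem_Ioo_mul_sub_one_mul _ _ _ hmem

/-- Wei-type duality for `(q,m)`-demi-polymatroids:
`d_{p+im}(P*) ≠ n + 1 − d_{p+K+jm}(P)`. -/
theorem demi_partial_wei_duality {F : Type*} [Field F] [Fintype F] {n m : ℕ}
    (P : QMDemiPolymatroid F n m) (p i j : ℤ)
    (h1 : 1 ≤ p + i * m) (h2 : p + i * m ≤ (m : ℤ) * (n : ℤ) - P.rho ⊤)
    (h3 : 1 ≤ p + P.rho ⊤ + j * m) (h4 : p + P.rho ⊤ + j * m ≤ P.rho ⊤) :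
    (genW (dualRho m P.rho) (p + i * m) : ℤ)
      ≠ (n : ℤ) + 1 - (genW P.rho (p + P.rho ⊤ + j * m) : ℤ) :=
  demi_partial_wei_duality_general P p i j h2 h4
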